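/- (Proposition 2 of the paper) Suppose O = ⋂_{i=1}^{K} Pᵢ and V = ⋂_{j=1}^{L} Qⱼ are nonempty intersections of primitives in ℝⁿ, with all relevant Minkowski differences proper nonempty subsets of ℝⁿ. Then max( max_j sd(0, O - Qⱼ), max_i sd(0, Pᵢ - V) ) ≤ sd(V, O). -/

import Mathlib

/-- Minkowski (pairwise) difference of sets. -/
def minkDiff {n : ℕ} (X Y : Set (EuclideanSpace ℝ (Fin n))) : Set (EuclideanSpace ℝ (Fin n)) :=
  {z | ∃ x ∈ X, ∃ y ∈ Y, z = x - y}

/-- Distance between sets: `dist(V,O) = inf{‖p‖ : (V + p) ∩ O ≠ ∅}`. -/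
noncomputable def distSet {n : ℕ} (V O : Set (EuclideanSpace ℝ (Fin n))) : ℝ :=
  sInf {r : ℝ | ∃ p : EuclideanSpace ℝ (Fin n),
    (((fun v => v + p) '' V) ∩ O).Nonempty ∧ r = ‖p‖}

/-- Penetration between sets: `pen(V,O) = inf{‖p‖ : (V + p) ∩ O = ∅}`. -/
noncomputable def penSet {n : ℕ} (V O : Set (EuclideanSpace ℝ (Fin n))) : ℝ :=
  sInf {r : ℝ | ∃ p : EuclideanSpace ℝ (Fin n),
    ((fun v => v + p) '' V) ∩ O = ∅ ∧ r = ‖p‖}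

/-- Signed distance from a point to a set. -/
noncomputable def sdPt {n : ℕ} (x : EuclideanSpace ℝ (Fin n))
    (S : Set (EuclideanSpace ℝ (Fin n))) : ℝ :=
  Metric.infDist x S - Metric.infDist x Sᶜ

/-!
A translate `V + p` meets `O` exactly when `p ∈ O - V`, so `dist(V, O)` and `pen(V, O)` are the
distances from the origin to `O - V` and to its complement: `sd(V, O) = sd(0, O - V)`.
Replacing `O` by a primitive `Pᵢ ⊇ O`, or `V` by `Qⱼ ⊇ V`, enlarges the Minkowski difference,
and the signed distance from a point is antitone in the set.
-/

open Pointwise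

section MinkowskiDifference

variable {n : ℕ}

theorem minkDiff_eq_sub (X Y : Set (EuclideanSpace ℝ (Fin n))) : minkDiff X Y = X - Y := by
  ext z
  simp only [minkDiff, Set.mem_ofPred_eq, Set.mem_sub, eq_comm]

theorem mem_minkDiff_iff_translate_inter_nonempty (O V : Set (EuclideanSpace ℝ (Fin n)))
    (p : EuclideanSpace ℝ (Fin n)) :
    p ∈ minkDiff O V ↔ ((fun v => v + p) '' V ∩ O).Nonempty := by
  constructor
  · rintro ⟨o, ho, v, hv, rfl⟩
    exact ⟨o, ⟨v, hv, add_sub_cancel v o⟩, ho⟩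
  · rintro ⟨_, ⟨v, hv, rfl⟩, hx⟩
    exact ⟨v + p, hx, v, hv, (add_sub_cancel_left v p).symm⟩

theorem infDist_zero_eq_sInf_norm_image (s : Set (EuclideanSpace ℝ (Fin n))) :
    Metric.infDist 0 s = sInf (norm '' s) := by
  simp only [Metric.infDist_eq_iInf, ← sInf_image', dist_zero_left]

theorem distSet_eq_infDist_minkDiff (V O : Set (EuclideanSpace ℝ (Fin n))) :
    distSet V O = Metric.infDist 0 (minkDiff O V) := by
  rw [infDist_zero_eq_sInf_norm_image, distSet]
  congr 1
  ext r
  simp only [Set.mem_ofPred_eq, Set.mem_image, mem_minkDiff_iff_translate_inter_nonempty, eq_comm]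

theorem penSet_eq_infDist_compl_minkDiff (V O : Set (EuclideanSpace ℝ (Fin n))) :
    penSet V O = Metric.infDist 0 (minkDiff O V)ᶜ := by
  rw [infDist_zero_eq_sInf_norm_image, penSet]
  congr 1
  ext r
  simp only [Set.mem_ofPred_eq, Set.mem_image, Set.mem_compl_iff,
    mem_minkDiff_iff_translate_inter_nonempty, Set.not_nonempty_iff_eq_empty, eq_comm]

theorem distSet_sub_penSet_eq_sdPt_minkDiff (V O : Set (EuclideanSpace ℝ (Fin n))) :
    distSet V O - penSet V O = sdPt 0 (minkDiff O V) := by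
  rw [distSet_eq_infDist_minkDiff, penSet_eq_infDist_compl_minkDiff, sdPt]

/-- Both hypotheses rule out the junk value `infDist x ∅ = 0`. -/
theorem sdPt_le_sdPt_of_subset (x : EuclideanSpace ℝ (Fin n)) {S S' : Set (EuclideanSpace ℝ (Fin n))}
    (hS : S.Nonempty) (hS' : S' ≠ Set.univ) (h : S ⊆ S') : sdPt x S' ≤ sdPt x S :=
  sub_le_sub (Metric.infDist_le_infDist_of_subset h hS)
    (Metric.infDist_le_infDist_of_subset (Set.compl_subset_compl.2 h) (Set.nonempty_compl.2 hS'))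

end MinkowskiDifference

theorem max_sd_minkDiff_primitives_le_sd_sets_general {n K L : ℕ}
    (P : Fin K → Set (EuclideanSpace ℝ (Fin n)))
    (Q : Fin L → Set (EuclideanSpace ℝ (Fin n)))
    (O V : Set (EuclideanSpace ℝ (Fin n)))
    (hO : O = ⋂ i, P i) (hV : V = ⋂ j, Q j)
    (hOne : O.Nonempty) (hVne : V.Nonempty)
    (hPd : ∀ i, minkDiff (P i) V ≠ Set.univ)
    (hQd : ∀ j, minkDiff O (Q j) ≠ Set.univ) :
    (∀ j, sdPt 0 (minkDiff O (Q j)) ≤ distSet V O - penSet V O) ∧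
    (∀ i, sdPt 0 (minkDiff (P i) V) ≤ distSet V O - penSet V O) := by
  rw [distSet_sub_penSet_eq_sdPt_minkDiff]
  have hOV : (minkDiff O V).Nonempty := by
    rw [minkDiff_eq_sub]
    exact hOne.sub hVne
  refine ⟨fun j => sdPt_le_sdPt_of_subset 0 hOV (hQd j) ?_, fun i => sdPt_le_sdPt_of_subset 0 hOV (hPd i) ?_⟩
  · rw [minkDiff_eq_sub, minkDiff_eq_sub, hV]
    exact Set.sub_subset_sub_left (Set.iInter_subset Q j)
  · rw [minkDiff_eq_sub, minkDiff_eq_sub, hO]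
    exact Set.sub_subset_sub_right (Set.iInter_subset P i)

/-- Proposition 2: if the obstacle `O = ⋂ i, P i` and the controlled system
`V = ⋂ j, Q j` are nonempty intersections of nonempty primitives, with all
relevant Minkowski differences proper subsets of `ℝⁿ`, then the signed
distances from the origin to the primitive Minkowski differences `O - Q j` and
`P i - V` are lower bounds for the signed distance `sd(V,O)`. -/
theorem max_sd_minkDiff_primitives_le_sd_sets {n K L : ℕ}
    (P : Fin K → Set (EuclideanSpace ℝ (Fin n)))
    (Q : Fin L → Set (EuclideanSpace ℝ (Fin n)))
    (O V : Set (EuclideanSpace ℝ (Fin n)))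
    (hO : O = ⋂ i, P i) (hV : V = ⋂ j, Q j)
    (hOne : O.Nonempty) (hVne : V.Nonempty)
    (hPne : ∀ i, (P i).Nonempty) (hQne : ∀ j, (Q j).Nonempty)
    (hPd : ∀ i, minkDiff (P i) V ≠ Set.univ)
    (hQd : ∀ j, minkDiff O (Q j) ≠ Set.univ)
    (hOVd : minkDiff O V ≠ Set.univ) :
    (∀ j, sdPt 0 (minkDiff O (Q j)) ≤ distSet V O - penSet V O) ∧
    (∀ i, sdPt 0 (minkDiff (P i) V) ≤ distSet V O - penSet V O) :=
  max_sd_minkDiff_primitives_le_sd_sets_general P Q O V hO hV hOne hVne hPd hQd
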